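/- arXiv:2204.01057 — 2 statements merged into one kernel-verified Lean document; each statement's English description precedes it below -/
import Mathlib

section
/- Let G and H be finite connected simple graphs, each with more than four vertices. If the line graphs L(G) and L(H) are isomorphic, then G and H are isomorphic. -/
open SimpleGraph


section Sym2Lemmas

variable {α : Type*}

lemma sym2_exists_mem (z : Sym2 α) : ∃ a, a ∈ z :=
  Sym2.ind (fun a b => ⟨a, Sym2.mem_mk_left a b⟩) z

/-- Two distinct `Sym2`s share at most one element. -/
lemma sym2_meet_unique {e f : Sym2 α} (hef : e ≠ f) {a b : α}
    (hae : a ∈ e) (haf : a ∈ f) (hbe : b ∈ e) (hbf : b ∈ f) : a = b := by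
  by_contra hne
  exact hef (Sym2.eq_of_ne_mem hne hae hbe haf hbf)

/-- Three pairwise distinct, pairwise intersecting `Sym2`s either have a common
element or form a triangle. -/
lemma sym2_triple_class {e f g : Sym2 α} (hef : e ≠ f) (heg : e ≠ g) (hfg : f ≠ g)
    (sef : ∃ p, p ∈ e ∧ p ∈ f) (seg : ∃ p, p ∈ e ∧ p ∈ g) (sfg : ∃ p, p ∈ f ∧ p ∈ g) :
    (∃ w, w ∈ e ∧ w ∈ f ∧ w ∈ g) ∨
      ∃ x y z : α, x ≠ y ∧ x ≠ z ∧ y ≠ z ∧ e = s(x, y) ∧ f = s(x, z) ∧ g = s(y, z) := by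
  by_cases hc : ∃ w, w ∈ e ∧ w ∈ f ∧ w ∈ g
  · exact Or.inl hc
  push_neg at hc
  obtain ⟨p, hpe, hpf⟩ := sef
  obtain ⟨q, hqe, hqg⟩ := seg
  obtain ⟨r, hrf, hrg⟩ := sfg
  have hpq : p ≠ q := fun h => hc p hpe hpf (h ▸ hqg)
  have hpr : p ≠ r := fun h => hc p hpe hpf (h ▸ hrg)
  have hqr : q ≠ r := fun h => hc q hqe (h ▸ hrf) hqg
  exact Or.inr ⟨p, q, r, hpq, hpr, hqr,
    (Sym2.mem_and_mem_iff hpq).mp ⟨hpe, hqe⟩,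
    (Sym2.mem_and_mem_iff hpr).mp ⟨hpf, hrf⟩,
    (Sym2.mem_and_mem_iff hqr).mp ⟨hqg, hrg⟩⟩

/-- Four pairwise distinct, pairwise intersecting `Sym2`s: the first three have a
common element. -/
lemma sym2_four_star {e f g k : Sym2 α} (hef : e ≠ f) (heg : e ≠ g) (hfg : f ≠ g)
    (hke : k ≠ e) (hkf : k ≠ f) (hkg : k ≠ g)
    (sef : ∃ p, p ∈ e ∧ p ∈ f) (seg : ∃ p, p ∈ e ∧ p ∈ g) (sfg : ∃ p, p ∈ f ∧ p ∈ g)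
    (ske : ∃ p, p ∈ k ∧ p ∈ e) (skf : ∃ p, p ∈ k ∧ p ∈ f) (skg : ∃ p, p ∈ k ∧ p ∈ g) :
    ∃ w, w ∈ e ∧ w ∈ f ∧ w ∈ g := by
  rcases sym2_triple_class hef heg hfg sef seg sfg with hc | ⟨x, y, z, hxy, hxz, hyz, he, hf, hg⟩
  · exact hc
  exfalso
  obtain ⟨p, hpk, hpe⟩ := ske
  rw [he, Sym2.mem_iff] at hpe
  rcases hpe with rfl | rfl
  · -- p = x ∈ k
    obtain ⟨r, hrk, hrg⟩ := skg
    rw [hg, Sym2.mem_iff] at hrg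
    rcases hrg with rfl | rfl
    · exact hke (((Sym2.mem_and_mem_iff hxy).mp ⟨hpk, hrk⟩).trans he.symm)
    · exact hkf (((Sym2.mem_and_mem_iff hxz).mp ⟨hpk, hrk⟩).trans hf.symm)
  · -- p = y ∈ k
    obtain ⟨r, hrk, hrf⟩ := skf
    rw [hf, Sym2.mem_iff] at hrf
    rcases hrf with rfl | rfl
    · exact hke (((Sym2.mem_and_mem_iff hxy).mp ⟨hrk, hpk⟩).trans he.symm)
    · exact hkg (((Sym2.mem_and_mem_iff (Ne.symm hyz).symm).mp ⟨hpk, hrk⟩).trans hg.symm)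

end Sym2Lemmas


section GraphLemmas

variable {V : Type*} [Fintype V] {G : SimpleGraph V}

lemma exists_adj (hG : G.Connected) (hV : 1 < Fintype.card V) (v : V) :
    ∃ u, G.Adj v u := by
  have : Nontrivial V := Fintype.one_lt_card_iff_nontrivial.mp hV
  obtain ⟨u, hu⟩ := exists_ne v
  have hr := hG.preconnected v u
  obtain ⟨w⟩ := hr
  cases w with
  | nil => exact absurd rfl (Ne.symm hu)
  | cons h p => exact ⟨_, h⟩

/-- In a connected graph with more than one vertex, every vertex lies on an edge. -/
lemma exists_edge_mem (hG : G.Connected) (hV : 1 < Fintype.card V) (v : V) :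
    ∃ e : G.edgeSet, v ∈ (e : Sym2 V) := by
  obtain ⟨u, hu⟩ := exists_adj hG hV v
  exact ⟨⟨s(v, u), hu⟩, Sym2.mem_mk_left v u⟩

/-- In a connected graph on more than two vertices, two distinct vertices lie on
different edge sets. -/
lemma no_twin (hG : G.Connected) (hV : 2 < Fintype.card V) {u v : V} (huv : u ≠ v)
    (htwin : ∀ e : G.edgeSet, u ∈ (e : Sym2 V) ↔ v ∈ (e : Sym2 V)) : False := by
  have h1V : 1 < Fintype.card V := lt_trans one_lt_two hV
  -- every neighbor of u is v
  have hnbu : ∀ z, G.Adj u z → z = v := by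
    intro z hz
    have hmem : v ∈ (⟨s(u, z), hz⟩ : G.edgeSet).1 :=
      (htwin ⟨s(u, z), hz⟩).mp (Sym2.mem_mk_left u z)
    rcases Sym2.mem_iff.mp hmem with h | h
    · exact absurd h.symm huv
    · exact h.symm
  have hnbv : ∀ z, G.Adj v z → z = u := by
    intro z hz
    have hmem : u ∈ (⟨s(v, z), hz⟩ : G.edgeSet).1 :=
      (htwin ⟨s(v, z), hz⟩).mpr (Sym2.mem_mk_left v z)
    rcases Sym2.mem_iff.mp hmem with h | h
    · exact absurd h.symm huv.symm
    · exact h.symm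
  -- a third vertex
  have : ∃ t : V, t ≠ u ∧ t ≠ v := by
    classical
    by_contra hcon
    push_neg at hcon
    have hsub : (Finset.univ : Finset V) ⊆ {u, v} := by
      intro x _
      by_cases hx : x = u
      · simp [hx]
      · simp [hcon x hx]
    have hle := Finset.card_le_card hsub
    simp only [Finset.card_univ] at hle
    have h2 : ({u, v} : Finset V).card ≤ 2 :=
      (Finset.card_insert_le _ _).trans (by simp)
    omega
  obtain ⟨t, htu, htv⟩ := this
  obtain ⟨w⟩ := hG.preconnected t u
  obtain ⟨d, _, hd1, hd2⟩ := w.exists_boundary_dart {x | x ≠ u ∧ x ≠ v} ⟨htu, htv⟩ (by simp)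
  simp only [Set.mem_setOf_eq, not_and_or, not_not] at hd2
  have hadj := d.adj
  rcases hd2 with h | h
  · exact hd1.2 ((hnbu d.fst (h ▸ hadj).symm) )
  · exact hd1.1 ((hnbv d.fst (h ▸ hadj).symm))

end GraphLemmas


section Core

variable {V W : Type*} {G : SimpleGraph V} {H : SimpleGraph W}

/-- If the images of a triple form a triangle `x,y,z` and `k` meets the first edge but
neither of the others, contradiction. -/
lemma triangle_kill (σ : G.edgeSet ≃ H.edgeSet)
    (hσ : ∀ e f : G.edgeSet, e ≠ f →
      ((∃ p, p ∈ (e : Sym2 V) ∧ p ∈ (f : Sym2 V)) ↔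
        ∃ q, q ∈ (σ e : Sym2 W) ∧ q ∈ (σ f : Sym2 W)))
    {E F Gg k : G.edgeSet} {x y z : W}
    (hE : (σ E : Sym2 W) = s(x, y)) (hF : (σ F : Sym2 W) = s(x, z))
    (hGg : (σ Gg : Sym2 W) = s(y, z))
    (hkE : k ≠ E) (skE : ∃ p, p ∈ (k : Sym2 V) ∧ p ∈ (E : Sym2 V))
    (nskF : ¬∃ p, p ∈ (k : Sym2 V) ∧ p ∈ (F : Sym2 V))
    (nskG : ¬∃ p, p ∈ (k : Sym2 V) ∧ p ∈ (Gg : Sym2 V)) : False := by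
  obtain ⟨p0, hp0⟩ := sym2_exists_mem (k : Sym2 V)
  have hkF : k ≠ F := by rintro rfl; exact nskF ⟨p0, hp0, hp0⟩
  have hkG : k ≠ Gg := by rintro rfl; exact nskG ⟨p0, hp0, hp0⟩
  obtain ⟨q, hqk, hqE⟩ := (hσ k E hkE).mp skE
  rw [hE, Sym2.mem_iff] at hqE
  rcases hqE with rfl | rfl
  · exact nskF ((hσ k F hkF).mpr ⟨q, hqk, by rw [hF]; exact Sym2.mem_mk_left q z⟩)
  · exact nskG ((hσ k Gg hkG).mpr ⟨q, hqk, by rw [hGg]; exact Sym2.mem_mk_left q z⟩)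

/-- Key lemma: the image under an edge-isomorphism of three edges sharing a common
vertex again has a common vertex (needs connectivity and `> 4` vertices). -/
lemma star_image [Fintype V] (hG : G.Connected) (hV : 4 < Fintype.card V)
    (σ : G.edgeSet ≃ H.edgeSet)
    (hσ : ∀ e f : G.edgeSet, e ≠ f →
      ((∃ p, p ∈ (e : Sym2 V) ∧ p ∈ (f : Sym2 V)) ↔
        ∃ q, q ∈ (σ e : Sym2 W) ∧ q ∈ (σ f : Sym2 W)))
    {v : V} {e f g : G.edgeSet} (hef : e ≠ f) (heg : e ≠ g) (hfg : f ≠ g)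
    (hve : v ∈ (e : Sym2 V)) (hvf : v ∈ (f : Sym2 V)) (hvg : v ∈ (g : Sym2 V)) :
    ∃ w, w ∈ (σ e : Sym2 W) ∧ w ∈ (σ f : Sym2 W) ∧ w ∈ (σ g : Sym2 W) := by
  classical
  have imne : ∀ {a b : G.edgeSet}, a ≠ b → (σ a : Sym2 W) ≠ (σ b : Sym2 W) :=
    fun hab h => hab (σ.injective (Subtype.ext h))
  have sef := (hσ e f hef).mp ⟨v, hve, hvf⟩
  have seg := (hσ e g heg).mp ⟨v, hve, hvg⟩
  have sfg := (hσ f g hfg).mp ⟨v, hvf, hvg⟩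
  by_cases hA : ∃ k : G.edgeSet, v ∈ (k : Sym2 V) ∧ k ≠ e ∧ k ≠ f ∧ k ≠ g
  · obtain ⟨k, hvk, hke, hkf, hkg⟩ := hA
    exact sym2_four_star (imne hef) (imne heg) (imne hfg)
      (imne hke) (imne hkf) (imne hkg) sef seg sfg
      ((hσ k e hke).mp ⟨v, hvk, hve⟩) ((hσ k f hkf).mp ⟨v, hvk, hvf⟩)
      ((hσ k g hkg).mp ⟨v, hvk, hvg⟩)
  push_neg at hA
  rcases sym2_triple_class (imne hef) (imne heg) (imne hfg) sef seg sfg with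
    hc | ⟨x, y, z, hxy, hxz, hyz, hEx, hFx, hGx⟩
  · exact hc
  exfalso
  -- name the endpoints
  obtain ⟨a, hea⟩ := Sym2.mem_iff_exists.mp hve
  obtain ⟨b, hfb⟩ := Sym2.mem_iff_exists.mp hvf
  obtain ⟨c, hgc⟩ := Sym2.mem_iff_exists.mp hvg
  have hva : v ≠ a := fun h => G.not_isDiag_of_mem_edgeSet e.2 (by rw [hea, ← h]; simp)
  have hvb : v ≠ b := fun h => G.not_isDiag_of_mem_edgeSet f.2 (by rw [hfb, ← h]; simp)
  have hvc : v ≠ c := fun h => G.not_isDiag_of_mem_edgeSet g.2 (by rw [hgc, ← h]; simp)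
  have hab : a ≠ b := fun h => hef (Subtype.ext (by rw [hea, hfb, h]))
  have hac : a ≠ c := fun h => heg (Subtype.ext (by rw [hea, hgc, h]))
  have hbc : b ≠ c := fun h => hfg (Subtype.ext (by rw [hfb, hgc, h]))
  -- a vertex outside {v, a, b, c}
  have hout : ∃ u : V, u ∉ ({v, a, b, c} : Set V) := by
    by_contra hcon
    push_neg at hcon
    have hsub : (Finset.univ : Finset V) ⊆ {v, a, b, c} := by
      intro t _
      have := hcon t
      simp only [Set.mem_insert_iff, Set.mem_singleton_iff] at this
      simp only [Finset.mem_insert, Finset.mem_singleton]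
      exact this
    have hle := Finset.card_le_card hsub
    simp only [Finset.card_univ] at hle
    have h4 : ({v, a, b, c} : Finset V).card ≤ 4 := by
      apply (Finset.card_insert_le _ _).trans
      apply Nat.succ_le_succ
      apply (Finset.card_insert_le _ _).trans
      apply Nat.succ_le_succ
      apply (Finset.card_insert_le _ _).trans
      simp
    omega
  obtain ⟨u, hu⟩ := hout
  obtain ⟨wk⟩ := hG.preconnected v u
  obtain ⟨d, _, hd1, hd2⟩ := wk.exists_boundary_dart {v, a, b, c} (by simp) hu
  have hadj := d.adj
  set k : G.edgeSet := ⟨s(d.fst, d.snd), hadj⟩ with hk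
  have hkmem : (k : Sym2 V) = s(d.fst, d.snd) := rfl
  have hsv : d.snd ≠ v := fun h => hd2 (by simp [h])
  have hsa : d.snd ≠ a := fun h => hd2 (by simp [h])
  have hsb : d.snd ≠ b := fun h => hd2 (by simp [h])
  have hsc : d.snd ≠ c := fun h => hd2 (by simp [h])
  simp only [Set.mem_insert_iff, Set.mem_singleton_iff] at hd1
  -- first: d.fst ≠ v
  have hfstv : d.fst ≠ v := by
    intro hfv
    have hvk : v ∈ (k : Sym2 V) := by rw [hkmem, hfv]; exact Sym2.mem_mk_left v _
    have hke : k ≠ e := by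
      intro h
      have : s(v, d.snd) = s(v, a) := by rw [← hfv, ← hkmem, h, hea, hfv]
      exact hsa (Sym2.congr_right.mp this)
    have hkf : k ≠ f := by
      intro h
      have : s(v, d.snd) = s(v, b) := by rw [← hfv, ← hkmem, h, hfb, hfv]
      exact hsb (Sym2.congr_right.mp this)
    have hkg : k ≠ g := by
      intro h
      have : s(v, d.snd) = s(v, c) := by rw [← hfv, ← hkmem, h, hgc, hfv]
      exact hsc (Sym2.congr_right.mp this)
    exact hkg (hA k hvk hke hkf)
  have hvk : v ∉ (k : Sym2 V) := by
    rw [hkmem, Sym2.mem_iff]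
    rintro (h | h)
    · exact hfstv h.symm
    · exact hsv h.symm
  have hke : k ≠ e := fun h => hvk (h ▸ hve)
  have hkf : k ≠ f := fun h => hvk (h ▸ hvf)
  have hkg : k ≠ g := fun h => hvk (h ▸ hvg)
  rcases hd1 with hfv | hfa | hfb' | hfc
  · exact hfstv hfv
  · -- d.fst = a : k meets e only
    refine triangle_kill σ hσ hEx hFx hGx hke
      ⟨a, by rw [hkmem, hfa]; exact Sym2.mem_mk_left a _, by rw [hea]; exact Sym2.mem_mk_right v a⟩
      ?_ ?_
    · rintro ⟨p, hp1, hp2⟩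
      rw [hkmem, hfa, Sym2.mem_iff] at hp1
      rw [hfb, Sym2.mem_iff] at hp2
      rcases hp1 with rfl | rfl <;> rcases hp2 with h | h
      · exact hva h.symm
      · exact hab h
      · exact hsv h
      · exact hsb h
    · rintro ⟨p, hp1, hp2⟩
      rw [hkmem, hfa, Sym2.mem_iff] at hp1
      rw [hgc, Sym2.mem_iff] at hp2
      rcases hp1 with rfl | rfl <;> rcases hp2 with h | h
      · exact hva h.symm
      · exact hac h
      · exact hsv h
      · exact hsc h
  · -- d.fst = b : k meets f only
    refine triangle_kill σ hσ hFx hEx (by rw [hGx, Sym2.eq_swap]) hkf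
      ⟨b, by rw [hkmem, hfb']; exact Sym2.mem_mk_left b _, by rw [hfb]; exact Sym2.mem_mk_right v b⟩
      ?_ ?_
    · rintro ⟨p, hp1, hp2⟩
      rw [hkmem, hfb', Sym2.mem_iff] at hp1
      rw [hea, Sym2.mem_iff] at hp2
      rcases hp1 with rfl | rfl <;> rcases hp2 with h | h
      · exact hvb h.symm
      · exact hab h.symm
      · exact hsv h
      · exact hsa h
    · rintro ⟨p, hp1, hp2⟩
      rw [hkmem, hfb', Sym2.mem_iff] at hp1
      rw [hgc, Sym2.mem_iff] at hp2
      rcases hp1 with rfl | rfl <;> rcases hp2 with h | h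
      · exact hvb h.symm
      · exact hbc h
      · exact hsv h
      · exact hsc h
  · -- d.fst = c : k meets g only
    refine triangle_kill σ hσ hGx (by rw [hEx, Sym2.eq_swap]) (by rw [hFx, Sym2.eq_swap]) hkg
      ⟨c, by rw [hkmem, hfc]; exact Sym2.mem_mk_left c _, by rw [hgc]; exact Sym2.mem_mk_right v c⟩
      ?_ ?_
    · rintro ⟨p, hp1, hp2⟩
      rw [hkmem, hfc, Sym2.mem_iff] at hp1
      rw [hea, Sym2.mem_iff] at hp2
      rcases hp1 with rfl | rfl <;> rcases hp2 with h | h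
      · exact hvc h.symm
      · exact hac h.symm
      · exact hsv h
      · exact hsa h
    · rintro ⟨p, hp1, hp2⟩
      rw [hkmem, hfc, Sym2.mem_iff] at hp1
      rw [hfb, Sym2.mem_iff] at hp2
      rcases hp1 with rfl | rfl <;> rcases hp2 with h | h
      · exact hvc h.symm
      · exact hbc h.symm
      · exact hsv h
      · exact hsb h

end Core
section Spec

variable {V W : Type*} {G : SimpleGraph V} {H : SimpleGraph W}

lemma hsigma_symm (σ : G.edgeSet ≃ H.edgeSet)
    (hσ : ∀ e f : G.edgeSet, e ≠ f →
      ((∃ p, p ∈ (e : Sym2 V) ∧ p ∈ (f : Sym2 V)) ↔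
        ∃ q, q ∈ (σ e : Sym2 W) ∧ q ∈ (σ f : Sym2 W))) :
    ∀ E F : H.edgeSet, E ≠ F →
      ((∃ q, q ∈ (E : Sym2 W) ∧ q ∈ (F : Sym2 W)) ↔
        ∃ p, p ∈ (σ.symm E : Sym2 V) ∧ p ∈ (σ.symm F : Sym2 V)) := by
  intro E F hEF
  have h2 : σ.symm E ≠ σ.symm F := fun h => hEF (σ.symm.injective h)
  have h3 := hσ _ _ h2
  simp only [Equiv.apply_symm_apply] at h3
  exact h3.symm

variable [Fintype V] [Fintype W]

lemma spec_of_two (hG : G.Connected) (hV : 4 < Fintype.card V)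
    (hH : H.Connected) (hW : 4 < Fintype.card W)
    (σ : G.edgeSet ≃ H.edgeSet)
    (hσ : ∀ e f : G.edgeSet, e ≠ f →
      ((∃ p, p ∈ (e : Sym2 V) ∧ p ∈ (f : Sym2 V)) ↔
        ∃ q, q ∈ (σ e : Sym2 W) ∧ q ∈ (σ f : Sym2 W)))
    {v : V} {e f : G.edgeSet} (hef : e ≠ f)
    (hve : v ∈ (e : Sym2 V)) (hvf : v ∈ (f : Sym2 V)) :
    ∃ w : W, ∀ k : G.edgeSet, v ∈ (k : Sym2 V) ↔ w ∈ (σ k : Sym2 W) := by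
  have hσ' := hsigma_symm σ hσ
  have imne : ∀ {a b : G.edgeSet}, a ≠ b → (σ a : Sym2 W) ≠ (σ b : Sym2 W) :=
    fun hab h => hab (σ.injective (Subtype.ext h))
  obtain ⟨w, hwe, hwf⟩ := (hσ e f hef).mp ⟨v, hve, hvf⟩
  refine ⟨w, fun k => ⟨fun hvk => ?_, fun hwk => ?_⟩⟩
  · by_cases hke : k = e
    · rw [hke]; exact hwe
    by_cases hkf : k = f
    · rw [hkf]; exact hwf
    obtain ⟨w', h1, h2, h3⟩ := star_image hG hV σ hσ hef
      (fun h => hke h.symm) (fun h => hkf h.symm) hve hvf hvk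
    have : w = w' := sym2_meet_unique (imne hef) hwe hwf h1 h2
    exact this ▸ h3
  · by_cases hke : k = e
    · rw [hke]; exact hve
    by_cases hkf : k = f
    · rw [hkf]; exact hvf
    have hse : σ e ≠ σ k := fun h => hke (σ.injective h).symm
    have hsf : σ f ≠ σ k := fun h => hkf (σ.injective h).symm
    have hsef : σ e ≠ σ f := fun h => hef (σ.injective h)
    obtain ⟨u, h1, h2, h3⟩ := star_image hH hW σ.symm hσ' hsef hse hsf hwe hwf hwk
    simp only [Equiv.symm_apply_apply] at h1 h2 h3
    have : u = v := sym2_meet_unique (fun h => hef (Subtype.ext h)) h1 h2 hve hvf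
    exact this ▸ h3

lemma spec_of_vertex (hG : G.Connected) (hV : 4 < Fintype.card V)
    (hH : H.Connected) (hW : 4 < Fintype.card W)
    (σ : G.edgeSet ≃ H.edgeSet)
    (hσ : ∀ e f : G.edgeSet, e ≠ f →
      ((∃ p, p ∈ (e : Sym2 V) ∧ p ∈ (f : Sym2 V)) ↔
        ∃ q, q ∈ (σ e : Sym2 W) ∧ q ∈ (σ f : Sym2 W)))
    (v : V) :
    ∃ w : W, ∀ k : G.edgeSet, v ∈ (k : Sym2 V) ↔ w ∈ (σ k : Sym2 W) := by
  obtain ⟨e₀, he₀⟩ := exists_edge_mem hG (by omega) v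
  by_cases h2 : ∃ f : G.edgeSet, v ∈ (f : Sym2 V) ∧ f ≠ e₀
  · obtain ⟨f, hvf, hfe⟩ := h2
    exact spec_of_two hG hV hH hW σ hσ (Ne.symm hfe) he₀ hvf
  push_neg at h2
  -- leaf case : e₀ is the unique edge at v
  obtain ⟨a, hea⟩ := Sym2.mem_iff_exists.mp he₀
  have hva : v ≠ a := fun h => G.not_isDiag_of_mem_edgeSet e₀.2 (by rw [hea, ← h]; simp)
  have hae : a ∈ (e₀ : Sym2 V) := by rw [hea]; exact Sym2.mem_mk_right v a
  have hsecond : ∃ f : G.edgeSet, a ∈ (f : Sym2 V) ∧ f ≠ e₀ := by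
    by_contra hcon
    push_neg at hcon
    refine no_twin hG (by omega) hva (fun k => ⟨fun h => ?_, fun h => ?_⟩)
    · rw [h2 k h]; exact hae
    · rw [hcon k h]; exact he₀
  obtain ⟨f, haf, hfe⟩ := hsecond
  obtain ⟨wa, hspa⟩ := spec_of_two hG hV hH hW σ hσ (Ne.symm hfe) hae haf
  have hwa : wa ∈ (σ e₀ : Sym2 W) := (hspa e₀).mp hae
  obtain ⟨t, hts⟩ := Sym2.mem_iff_exists.mp hwa
  have hwt : wa ≠ t := fun h =>
    H.not_isDiag_of_mem_edgeSet (σ e₀).2 (by rw [hts, ← h]; simp)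
  refine ⟨t, fun k => ⟨fun hvk => ?_, fun htk => ?_⟩⟩
  · rw [h2 k hvk, hts]; exact Sym2.mem_mk_right wa t
  · by_cases hke : k = e₀
    · rw [hke]; exact he₀
    obtain ⟨p, hpk, hpe⟩ := (hσ k e₀ hke).mpr
      ⟨t, htk, by rw [hts]; exact Sym2.mem_mk_right wa t⟩
    rw [hea, Sym2.mem_iff] at hpe
    rcases hpe with rfl | rfl
    · exact hpk
    · exfalso
      have hwk : wa ∈ (σ k : Sym2 W) := (hspa k).mp hpk
      have heq : (σ k : Sym2 W) = (σ e₀ : Sym2 W) :=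
        Sym2.eq_of_ne_mem hwt hwk htk hwa (by rw [hts]; exact Sym2.mem_mk_right wa t)
      exact hke (σ.injective (Subtype.ext heq))

end Spec

/-- For finite connected simple graphs `G` and `H`, each with more than four vertices,
if the line graphs `L(G)` and `L(H)` are isomorphic then `G` and `H` are isomorphic. -/
theorem iso_of_lineGraph_iso {V W : Type*} [Fintype V] [Fintype W]
    (G : SimpleGraph V) (H : SimpleGraph W)
    (hG : G.Connected) (hH : H.Connected)
    (hV : 4 < Fintype.card V) (hW : 4 < Fintype.card W)
    (h : Nonempty (G.lineGraph ≃g H.lineGraph)) :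
    Nonempty (G ≃g H) := by
  obtain ⟨φ⟩ := h
  set σ : G.edgeSet ≃ H.edgeSet := φ.toEquiv with hσdef
  have hσ : ∀ e f : G.edgeSet, e ≠ f →
      ((∃ p, p ∈ (e : Sym2 V) ∧ p ∈ (f : Sym2 V)) ↔
        ∃ q, q ∈ (σ e : Sym2 W) ∧ q ∈ (σ f : Sym2 W)) := by
    intro e f hef
    constructor
    · intro hs
      have hadj : G.lineGraph.Adj e f := lineGraph_adj_iff_exists.mpr ⟨hef, hs⟩
      have := φ.map_rel_iff.mpr hadj
      exact (lineGraph_adj_iff_exists.mp this).2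
    · intro hs
      have hne : φ e ≠ φ f := fun hh => hef (EmbeddingLike.injective φ hh)
      have hadj : H.lineGraph.Adj (φ e) (φ f) := lineGraph_adj_iff_exists.mpr ⟨hne, hs⟩
      exact (lineGraph_adj_iff_exists.mp (φ.map_rel_iff.mp hadj)).2
  have hσ' := hsigma_symm σ hσ
  -- the vertex maps
  choose ψ hψ using spec_of_vertex hG hV hH hW σ hσ
  choose τ hτ using spec_of_vertex hH hW hG hV σ.symm hσ'
  have hleft : ∀ v, τ (ψ v) = v := by
    intro v
    by_contra hne
    refine no_twin hG (by omega) hne (fun k => ⟨fun hk => ?_, fun hk => ?_⟩)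
    · have h1 := (hτ (ψ v) (σ k))
      simp only [Equiv.symm_apply_apply] at h1
      exact (hψ v k).mpr (h1.mpr hk)
    · have h1 := (hτ (ψ v) (σ k))
      simp only [Equiv.symm_apply_apply] at h1
      exact h1.mp ((hψ v k).mp hk)
  have hright : ∀ w, ψ (τ w) = w := by
    intro w
    by_contra hne
    refine no_twin hH (by omega) hne (fun K => ⟨fun hK => ?_, fun hK => ?_⟩)
    · have h1 := (hψ (τ w) (σ.symm K))
      simp only [Equiv.apply_symm_apply] at h1
      exact (hτ w K).mpr (h1.mpr hK)
    · have h1 := (hψ (τ w) (σ.symm K))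
      simp only [Equiv.apply_symm_apply] at h1
      exact h1.mp ((hτ w K).mp hK)
  refine ⟨⟨⟨ψ, τ, hleft, hright⟩, @fun u v => ?_⟩⟩
  constructor
  · -- H.Adj (ψ u) (ψ v) → G.Adj u v
    intro hadj
    have huv : u ≠ v := by
      intro hh
      exact H.ne_of_adj hadj (by rw [hh])
    set E : H.edgeSet := ⟨s(ψ u, ψ v), hadj⟩ with hE
    have hu : u ∈ (σ.symm E : Sym2 V) := by
      have h1 := hψ u (σ.symm E)
      simp only [Equiv.apply_symm_apply] at h1
      exact h1.mpr (Sym2.mem_mk_left _ _)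
    have hv : v ∈ (σ.symm E : Sym2 V) := by
      have h1 := hψ v (σ.symm E)
      simp only [Equiv.apply_symm_apply] at h1
      exact h1.mpr (Sym2.mem_mk_right _ _)
    have : (σ.symm E : Sym2 V) = s(u, v) := (Sym2.mem_and_mem_iff huv).mp ⟨hu, hv⟩
    have hmem := (σ.symm E).2
    rw [this] at hmem
    exact (G.mem_edgeSet).mp hmem
  · -- G.Adj u v → H.Adj (ψ u) (ψ v)
    intro hadj
    set e : G.edgeSet := ⟨s(u, v), hadj⟩ with he
    have hu : ψ u ∈ (σ e : Sym2 W) := (hψ u e).mp (Sym2.mem_mk_left _ _)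
    have hv : ψ v ∈ (σ e : Sym2 W) := (hψ v e).mp (Sym2.mem_mk_right _ _)
    have hne : ψ u ≠ ψ v := by
      intro hh
      exact G.ne_of_adj hadj (by rw [← hleft u, hh, hleft v])
    have : (σ e : Sym2 W) = s(ψ u, ψ v) := (Sym2.mem_and_mem_iff hne).mp ⟨hu, hv⟩
    have hmem := (σ e).2
    rw [this] at hmem
    exact (H.mem_edgeSet).mp hmem
end

section
/- Let G and H be finite simple graphs, each with exactly n vertices. Then G and H are isomorphic if and only if the modular product of G and H contains a clique of size n. -/
open SimpleGraph

/-- The modular product of two simple graphs `G` and `H`: vertices are pairs `(u, v)`,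
and `(u, v)` is adjacent to `(u', v')` exactly when `u ≠ u'`, `v ≠ v'`, and
`u` is adjacent to `u'` in `G` if and only if `v` is adjacent to `v'` in `H`. -/
def modularProduct {V W : Type*} (G : SimpleGraph V) (H : SimpleGraph W) :
    SimpleGraph (V × W) where
  Adj p q := p.1 ≠ q.1 ∧ p.2 ≠ q.2 ∧ (G.Adj p.1 q.1 ↔ H.Adj p.2 q.2)
  symm := ⟨by
    rintro p q ⟨h1, h2, h3⟩
    exact ⟨h1.symm, h2.symm, by rw [G.adj_comm, H.adj_comm]; exact h3⟩⟩
  loopless := ⟨by rintro p ⟨h1, -, -⟩; exact h1 rfl⟩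

/-! The graph `{(u, f u)}` of an isomorphism `f` is a clique of the modular product.
Conversely, both projections are injective on a clique `K` of the modular product, and `u ~ u'`
iff `v ~ v'` for `(u, v), (u', v') ∈ K`. So when `|K| = |V| = |W|` the projections are bijections
`K ≃ V` and `K ≃ W`, and `K` is the graph of an isomorphism `G ≃g H`. -/

section

variable {V W : Type*} {G : SimpleGraph V} {H : SimpleGraph W}

theorem isClique_modularProduct_range (f : G ↪g H) :
    (modularProduct G H).IsClique (Set.range fun u => (u, f u)) := by
  rintro _ ⟨u, rfl⟩ _ ⟨u', rfl⟩ hne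
  have huu' : u ≠ u' := fun h => hne (h ▸ rfl)
  exact ⟨huu', f.injective.ne huu', f.map_adj_iff.symm⟩

def Function.Embedding.graph (f : V ↪ W) : V ↪ V × W :=
  ⟨fun u => (u, f u), fun _ _ h => congrArg Prod.fst h⟩

theorem isNClique_modularProduct_map_graph [Fintype V] (f : G ↪g H) :
    (modularProduct G H).IsNClique (Fintype.card V) (Finset.univ.map f.toEmbedding.graph) := by
  refine ⟨?_, by rw [Finset.card_map, Finset.card_univ]⟩
  rw [Finset.coe_map, Finset.coe_univ, Set.image_univ]
  exact isClique_modularProduct_range f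

namespace SimpleGraph.IsClique

variable {K : Set (V × W)}

theorem injOn_fst (hK : (modularProduct G H).IsClique K) : K.InjOn Prod.fst :=
  fun _ hp _ hq h => of_not_not fun hne => (hK hp hq hne).1 h

theorem injOn_snd (hK : (modularProduct G H).IsClique K) : K.InjOn Prod.snd :=
  fun _ hp _ hq h => of_not_not fun hne => (hK hp hq hne).2.1 h

theorem adj_fst_iff_adj_snd (hK : (modularProduct G H).IsClique K) {p q : V × W}
    (hp : p ∈ K) (hq : q ∈ K) :
    G.Adj p.1 q.1 ↔ H.Adj p.2 q.2 := by
  obtain rfl | hpq := eq_or_ne p q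
  · simp
  · exact (hK hp hq hpq).2.2

noncomputable def isoOfBijective (hK : (modularProduct G H).IsClique K)
    (hfst : Function.Bijective fun p : K => p.1.1)
    (hsnd : Function.Bijective fun p : K => p.1.2) : G ≃g H where
  toEquiv := (Equiv.ofBijective _ hfst).symm.trans (Equiv.ofBijective _ hsnd)
  map_rel_iff' {u u'} := by
    obtain ⟨p, rfl⟩ := hfst.surjective u
    obtain ⟨q, rfl⟩ := hfst.surjective u'
    simp only [Equiv.trans_apply, Equiv.ofBijective_symm_apply_apply, Equiv.ofBijective_apply]
    exact (hK.adj_fst_iff_adj_snd p.2 q.2).symm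

end SimpleGraph.IsClique

namespace SimpleGraph.IsNClique

variable {K : Finset (V × W)}

theorem bijective_fst [Fintype V] (hK : (modularProduct G H).IsNClique (Fintype.card V) K) :
    Function.Bijective fun p : K => p.1.1 :=
  (Fintype.bijective_iff_injective_and_card _).2
    ⟨Set.injOn_iff_injective.1 hK.isClique.injOn_fst, by simp [hK.card_eq]⟩

theorem bijective_snd [Fintype W] (hK : (modularProduct G H).IsNClique (Fintype.card W) K) :
    Function.Bijective fun p : K => p.1.2 :=
  (Fintype.bijective_iff_injective_and_card _).2
    ⟨Set.injOn_iff_injective.1 hK.isClique.injOn_snd, by simp [hK.card_eq]⟩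

end SimpleGraph.IsNClique

end

/-- Finite simple graphs `G` and `H`, each on exactly `n` vertices, are isomorphic iff
their modular product contains a clique of size `n`. -/
theorem iso_iff_modularProduct_clique {V W : Type*} [Fintype V] [Fintype W]
    (G : SimpleGraph V) (H : SimpleGraph W) (n : ℕ)
    (hV : Fintype.card V = n) (hW : Fintype.card W = n) :
    Nonempty (G ≃g H) ↔ ∃ K : Finset (V × W), (modularProduct G H).IsNClique n K := by
  subst hV
  constructor
  · rintro ⟨f⟩
    exact ⟨_, isNClique_modularProduct_map_graph f.toEmbedding⟩
  · rintro ⟨K, hK⟩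
    exact ⟨hK.isClique.isoOfBijective hK.bijective_fst (hW ▸ hK).bijective_snd⟩
end
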